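/- Consider a commutative diagram of factor maps π : (X,G) → (Y,G), π_X : (X,G) → (Z,G), π_Y : (Y,G) → (Z,G) with π_Y ∘ π = π_X. If (y₁,…,y_n) is an off-diagonal n-tuple of Y with relative entropy dimension D̄(y₁,…,y_n|π_Y) = α, then there exists an off-diagonal n-tuple (x₁,…,x_n) of X with π(x_i) = y_i for each i and D̄(x₁,…,x_n|π_X) = α. -/

import Mathlib

open Filter Topology Pointwise
open scoped ENNReal

/-- A Følner sequence for a group `G`. -/
def IsFolnerSeq (G : Type*) [Group G] (F : ℕ → Finset G) : Prop :=
  (∀ n, (F n).Nonempty) ∧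
    ∀ (K : Finset G) (δ : ℝ), 0 < δ →
      ∀ᶠ n in atTop,
        ((symmDiff ((K : Set G) * ((F n : Set G))) ((F n : Set G))).ncard : ℝ) <
          δ * ((F n).card : ℝ)

/-- Amenability of a (countable discrete) group via almost invariant finite sets. -/
def IsAmenableGrp (G : Type*) [Group G] : Prop :=
  ∀ K : Finset G, K.Nonempty → ∀ δ : ℝ, 0 < δ →
    ∃ F : Finset G, F.Nonempty ∧
      ((symmDiff ((K : Set G) * (F : Set G)) (F : Set G)).ncard : ℝ) < δ * (F.card : ℝ)

/-- The finite set `A ∩ S`. -/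
noncomputable def interF {G : Type*} (A : Finset G) (S : Set G) : Finset G :=
  @Finset.filter G (fun g => g ∈ S) (Classical.decPred _) A

/-- `S` belongs to `𝓘(G)` : `|S ∩ F n| → ∞`. -/
def InI {G : Type*} (F : ℕ → Finset G) (S : Set G) : Prop :=
  Tendsto (fun n => (interF (F n) S).card) atTop atTop

/-- `D̄(S, α) = limsup_n |S ∩ F n| / |F n|^α`. -/
noncomputable def DbarAt {G : Type*} (F : ℕ → Finset G) (S : Set G) (α : ℝ) : ℝ≥0∞ :=
  atTop.limsup fun n =>
    ((interF (F n) S).card : ℝ≥0∞) / ENNReal.ofReal (((F n).card : ℝ) ^ α)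

/-- `D̲(S, α) = liminf_n |S ∩ F n| / |F n|^α`. -/
noncomputable def DlowAt {G : Type*} (F : ℕ → Finset G) (S : Set G) (α : ℝ) : ℝ≥0∞ :=
  atTop.liminf fun n =>
    ((interF (F n) S).card : ℝ≥0∞) / ENNReal.ofReal (((F n).card : ℝ) ^ α)

/-- The upper dimension `D̄(S)` of a subset `S ⊆ G`. -/
noncomputable def upperDim {G : Type*} (F : ℕ → Finset G) (S : Set G) : ℝ :=
  sInf {α : ℝ | 0 ≤ α ∧ DbarAt F S α = 0}

/-- The lower dimension `D̲(S)` of a subset `S ⊆ G`. -/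
noncomputable def lowerDim {G : Type*} (F : ℕ → Finset G) (S : Set G) : ℝ :=
  sInf {α : ℝ | 0 ≤ α ∧ DlowAt F S α = 0}

/-- A finite open cover of `X`. -/
def IsOpenCover {X : Type*} [TopologicalSpace X] (𝒰 : Set (Set X)) : Prop :=
  𝒰.Finite ∧ (∀ U ∈ 𝒰, IsOpen U) ∧ ⋃₀ 𝒰 = Set.univ

/-- Minimal number of members of `𝒰` needed to cover `E`. -/
noncomputable def coverNum {X : Type*} (𝒰 : Set (Set X)) (E : Set X) : ℕ :=
  sInf {k | ∃ t : Finset (Set X), ↑t ⊆ 𝒰 ∧ t.card = k ∧ E ⊆ ⋃₀ (t : Set (Set X))}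

/-- `N(𝒰 | π) = sup_y` of the covering number of the fiber `π ⁻¹ y`. -/
noncomputable def NRel {X Y : Type*} (𝒰 : Set (Set X)) (π : X → Y) : ℕ :=
  ⨆ y : Y, coverNum 𝒰 (π ⁻¹' {y})

/-- A factor map between `G`-systems. -/
def IsFactorMap (G : Type*) {X Y : Type*} [Group G] [TopologicalSpace X] [TopologicalSpace Y]
    [MulAction G X] [MulAction G Y] (π : X → Y) : Prop :=
  Continuous π ∧ Function.Surjective π ∧ ∀ (g : G) (x : X), π (g • x) = g • π x

/-- The join `⋁_{g ∈ B} g⁻¹ 𝒰`. -/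
def dynJoin {G X : Type*} [Group G] [MulAction G X] (B : Finset G) (𝒰 : Set (Set X)) :
    Set (Set X) :=
  {W | ∃ f : G → Set X, (∀ g ∈ B, f g ∈ 𝒰) ∧ W = ⋂ g ∈ B, (fun x => g • x) ⁻¹' f g}

/-- `h̄(G, 𝒰, α | π)`. -/
noncomputable def hRelU {G X Y : Type*} [Group G] [MulAction G X]
    (F : ℕ → Finset G) (𝒰 : Set (Set X)) (π : X → Y) (α : ℝ) : ℝ≥0∞ :=
  atTop.limsup fun n =>
    ENNReal.ofReal (Real.log (NRel (dynJoin (F n) 𝒰) π)) /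
      ENNReal.ofReal (((F n).card : ℝ) ^ α)

/-- `h̲(G, 𝒰, α | π)`. -/
noncomputable def hRelL {G X Y : Type*} [Group G] [MulAction G X]
    (F : ℕ → Finset G) (𝒰 : Set (Set X)) (π : X → Y) (α : ℝ) : ℝ≥0∞ :=
  atTop.liminf fun n =>
    ENNReal.ofReal (Real.log (NRel (dynJoin (F n) 𝒰) π)) /
      ENNReal.ofReal (((F n).card : ℝ) ^ α)

/-- The relative upper entropy dimension `D̄(G, 𝒰 | π)` of a cover. -/
noncomputable def DU {G X Y : Type*} [Group G] [MulAction G X]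
    (F : ℕ → Finset G) (𝒰 : Set (Set X)) (π : X → Y) : ℝ :=
  sInf {α : ℝ | 0 ≤ α ∧ hRelU F 𝒰 π α = 0}

/-- The relative lower entropy dimension `D̲(G, 𝒰 | π)` of a cover. -/
noncomputable def DL {G X Y : Type*} [Group G] [MulAction G X]
    (F : ℕ → Finset G) (𝒰 : Set (Set X)) (π : X → Y) : ℝ :=
  sInf {α : ℝ | 0 ≤ α ∧ hRelL F 𝒰 π α = 0}

/-- The relative upper entropy dimension `D̄(X, G | π)` of the system. -/
noncomputable def DUSys {G X Y : Type*} [Group G] [TopologicalSpace X] [MulAction G X]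
    (F : ℕ → Finset G) (π : X → Y) : ℝ :=
  sSup {d : ℝ | ∃ 𝒰 : Set (Set X), IsOpenCover 𝒰 ∧ d = DU F 𝒰 π}

/-- The relative lower entropy dimension `D̲(X, G | π)` of the system. -/
noncomputable def DLSys {G X Y : Type*} [Group G] [TopologicalSpace X] [MulAction G X]
    (F : ℕ → Finset G) (π : X → Y) : ℝ :=
  sSup {d : ℝ | ∃ 𝒰 : Set (Set X), IsOpenCover 𝒰 ∧ d = DL F 𝒰 π}

/-- `(1 / |F n ∩ S|) log N(⋁_{g ∈ F n ∩ S} g⁻¹ 𝒰 | π)`. -/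
noncomputable def entAlong {G X Y : Type*} [Group G] [MulAction G X]
    (F : ℕ → Finset G) (S : Set G) (𝒰 : Set (Set X)) (π : X → Y) : ℕ → ℝ≥0∞ :=
  fun n =>
    ENNReal.ofReal (Real.log (NRel (dynJoin (interF (F n) S) 𝒰) π)) /
      ((interF (F n) S).card : ℝ≥0∞)

/-- `S` is a relative entropy generating set of `𝒰` relative to `π`. -/
def IsEntGen {G X Y : Type*} [Group G] [MulAction G X]
    (F : ℕ → Finset G) (S : Set G) (𝒰 : Set (Set X)) (π : X → Y) : Prop :=
  InI F S ∧ 0 < atTop.liminf (entAlong F S 𝒰 π)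

/-- `S ∈ 𝒫(G, 𝒰 | π)` : positive relative upper entropy along `S`. -/
def InP {G X Y : Type*} [Group G] [MulAction G X]
    (F : ℕ → Finset G) (S : Set G) (𝒰 : Set (Set X)) (π : X → Y) : Prop :=
  InI F S ∧ 0 < atTop.limsup (entAlong F S 𝒰 π)

/-- `D̄_e(G, 𝒰 | π)`. -/
noncomputable def DeU {G X Y : Type*} [Group G] [MulAction G X]
    (F : ℕ → Finset G) (𝒰 : Set (Set X)) (π : X → Y) : ℝ :=
  sSup {d : ℝ | ∃ S : Set G, IsEntGen F S 𝒰 π ∧ d = upperDim F S}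

/-- `D̲_e(G, 𝒰 | π)`. -/
noncomputable def DeL {G X Y : Type*} [Group G] [MulAction G X]
    (F : ℕ → Finset G) (𝒰 : Set (Set X)) (π : X → Y) : ℝ :=
  sSup {d : ℝ | ∃ S : Set G, IsEntGen F S 𝒰 π ∧ d = lowerDim F S}

/-- `D̄_p(G, 𝒰 | π)`. -/
noncomputable def DpU {G X Y : Type*} [Group G] [MulAction G X]
    (F : ℕ → Finset G) (𝒰 : Set (Set X)) (π : X → Y) : ℝ :=
  sSup {d : ℝ | ∃ S : Set G, InP F S 𝒰 π ∧ d = upperDim F S}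

/-- `D̲_p(G, 𝒰 | π)`. -/
noncomputable def DpL {G X Y : Type*} [Group G] [MulAction G X]
    (F : ℕ → Finset G) (𝒰 : Set (Set X)) (π : X → Y) : ℝ :=
  sSup {d : ℝ | ∃ S : Set G, InP F S 𝒰 π ∧ d = lowerDim F S}

/-- `D̄_e(X, G | π)`. -/
noncomputable def DeUSys {G X Y : Type*} [Group G] [TopologicalSpace X] [MulAction G X]
    (F : ℕ → Finset G) (π : X → Y) : ℝ :=
  sSup {d : ℝ | ∃ 𝒰 : Set (Set X), IsOpenCover 𝒰 ∧ d = DeU F 𝒰 π}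

/-- `D̲_p(X, G | π)`. -/
noncomputable def DpLSys {G X Y : Type*} [Group G] [TopologicalSpace X] [MulAction G X]
    (F : ℕ → Finset G) (π : X → Y) : ℝ :=
  sSup {d : ℝ | ∃ 𝒰 : Set (Set X), IsOpenCover 𝒰 ∧ d = DpL F 𝒰 π}

/-- The cover `{X ∖ cl B(x i, 1/k) : i}` associated with a tuple. -/
def ballCover {X : Type*} [MetricSpace X] {n : ℕ} (x : Fin n → X) (k : ℕ) : Set (Set X) :=
  {V | ∃ i : Fin n, V = (Metric.closedBall (x i) (1 / (k : ℝ)))ᶜ}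

/-- The relative entropy dimension `D̄(x₁, …, x_n | π)` of a tuple. -/
noncomputable def tupleDim {G X Y : Type*} [Group G] [MetricSpace X] [MulAction G X] {n : ℕ}
    (F : ℕ → Finset G) (x : Fin n → X) (π : X → Y) : ℝ :=
  limUnder atTop fun k : ℕ => DU F (ballCover x k) π

/-- The tuple lies on the diagonal. -/
def IsDiag {X : Type*} {n : ℕ} (x : Fin n → X) : Prop := ∀ i j, x i = x j

/-- The `n`-th relative dimension set `𝒟_n(X, G | π)`. -/
noncomputable def dimSet {G X Z : Type*} [Group G] [MetricSpace X] [MulAction G X]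
    (F : ℕ → Finset G) (π : X → Z) (n : ℕ) : Set ℝ :=
  {α : ℝ | 0 ≤ α ∧ ∃ x : Fin n → X, ¬ IsDiag x ∧ tupleDim F x π = α}

/-- The translated cover `g𝒰`. -/
def smulCover {G X : Type*} [SMul G X] (g : G) (𝒰 : Set (Set X)) : Set (Set X) :=
  (fun U => (fun x => g • x) '' U) '' 𝒰

/-- The join `𝒰 ∨ 𝒱` of two covers. -/
def covJoin {X : Type*} (𝒰 𝒱 : Set (Set X)) : Set (Set X) :=
  {W | ∃ U ∈ 𝒰, ∃ V ∈ 𝒱, W = U ∩ V}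

/-- A standard cover: two non-dense open sets covering `X`. -/
def IsStandardCover {X : Type*} [TopologicalSpace X] (𝒲 : Set (Set X)) : Prop :=
  ∃ U V : Set X, 𝒲 = {U, V} ∧ IsOpen U ∧ IsOpen V ∧ U ∪ V = Set.univ ∧
    ¬ Dense U ∧ ¬ Dense V

/-!
Cover each fibre `π⁻¹(yᵢ)` by finitely many `1/l`-balls and let `Nᵢ` be the union of their
closures. The cover `{Nᵢᶜ}` refines the pullback of the `1/j`-ball cover of `y` for large `j`,
and it is refined by the join of the ball covers of all tuples `c` of centres. Since `log N` is
subadditive on joins and the sets of exponents with vanishing entropy are upward closed, a single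
tuple `c_l` of centres already has vanishing entropy wherever `{Nᵢᶜ}` has. A cluster point `x` of
the lifts `c_l` then has ball covers squeezed by those of `y` in both directions (one way by
continuity of `π`, the other through `c_l`), so the entropy dimensions of `x` and `y` agree.
-/

open Set Metric

lemma exists_fun_forall_mem {α β : Type*} [Nonempty β] {s : Set α} {P : α → β → Prop}
    (h : ∀ a ∈ s, ∃ b, P a b) : ∃ f : α → β, ∀ a ∈ s, P a (f a) := by
  classical
  exact ⟨fun a => if ha : a ∈ s then (h a ha).choose else Classical.arbitrary β,
    fun a ha => by simpa [ha] using (h a ha).choose_spec⟩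

lemma Real.log_natCast_mono : Monotone fun n : ℕ => Real.log n := by
  intro a b hab
  rcases Nat.eq_zero_or_pos a with rfl | ha
  · simpa using Real.log_natCast_nonneg b
  · exact Real.log_le_log (by exact_mod_cast ha) (by exact_mod_cast hab)

lemma Real.log_natCast_le_sum_log {ι : Type*} [Fintype ι] {a : ℕ} {b : ι → ℕ}
    (h : a ≤ ∏ s, b s) : Real.log a ≤ ∑ s, Real.log (b s) := by
  by_cases hb : ∃ s, b s = 0
  · obtain ⟨s, hs⟩ := hb
    rw [Finset.prod_eq_zero (Finset.mem_univ s) hs, Nat.le_zero] at h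
    simpa [h] using Finset.sum_nonneg fun s _ => Real.log_natCast_nonneg (b s)
  · calc Real.log a ≤ Real.log (∏ s, b s : ℕ) := Real.log_natCast_mono h
      _ = ∑ s, Real.log (b s) := by
        rw [Nat.cast_prod, Real.log_prod fun s _ => Nat.cast_ne_zero.2 (not_exists.1 hb s)]

/-- Upper sets of a linear order form a chain. -/
lemma exists_subset_of_iInter_subset {ι α : Type*} [Finite ι] [Nonempty ι] [LinearOrder α]
    {A : ι → Set α} (hA : ∀ s, IsUpperSet (A s)) {S : Set α} (h : ⋂ s, A s ⊆ S) :
    ∃ s, A s ⊆ S := by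
  by_contra! hS
  choose q hqA hqS using fun s => not_subset.1 (hS s)
  obtain ⟨s₀, hs₀⟩ := Finite.exists_max q
  exact hqS s₀ (h (mem_iInter.2 fun s => hA s (hs₀ s) (hqA s)))

section Interleaved

variable {α : Type*} [ConditionallyCompleteLinearOrder α] [TopologicalSpace α] [OrderTopology α]

lemma tendsto_csInf_of_eventually_subset {ι : Type*} {l : Filter ι} {S : Set α}
    (hS : BddBelow S) {B : ι → Set α} (hsub : ∀ᶠ k in l, B k ⊆ S)
    (hmem : ∀ s ∈ S, ∀ᶠ k in l, s ∈ B k) : Tendsto (fun k => sInf (B k)) l (𝓝 (sInf S)) := by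
  rcases S.eq_empty_or_nonempty with rfl | ⟨s₀, hs₀⟩
  · exact tendsto_const_nhds.congr' (hsub.mono fun k hk => by simp only [subset_empty_iff.1 hk])
  refine tendsto_order.2 ⟨fun a ha => ?_, fun a ha => ?_⟩
  · filter_upwards [hsub, hmem s₀ hs₀] with k hk hs₀k
    exact ha.trans_le (csInf_le_csInf hS ⟨s₀, hs₀k⟩ hk)
  · obtain ⟨s, hs, hsa⟩ := exists_lt_of_csInf_lt ⟨s₀, hs₀⟩ ha
    filter_upwards [hsub, hmem s hs] with k hk hsk
    exact (csInf_le (hS.mono hk) hsk).trans_lt hsa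

/-- Both sequences of infima converge to the infimum of `{s | ∀ᶠ j, s ∈ A j}`. -/
lemma limUnder_csInf_eq_of_interleaved [Nonempty α] {ι κ : Type*} {l₁ : Filter ι}
    {l₂ : Filter κ} [l₁.NeBot] [l₂.NeBot] {A : ι → Set α} {B : κ → Set α}
    (hbdd : BddBelow (⋃ j, A j)) (hAB : ∀ᶠ j in l₁, ∀ᶠ k in l₂, A j ⊆ B k)
    (hBA : ∀ᶠ k in l₂, ∀ᶠ j in l₁, B k ⊆ A j) :
    limUnder l₂ (fun k => sInf (B k)) = limUnder l₁ (fun j => sInf (A j)) := by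
  set S := {s | ∀ᶠ j in l₁, s ∈ A j}
  have hS : BddBelow S := hbdd.mono fun s hs => mem_iUnion.2 hs.exists
  have hBS : ∀ᶠ k in l₂, B k ⊆ S := hBA.mono fun k hk s hs => hk.mono fun j hj => hj hs
  have hAS : ∀ᶠ j in l₁, A j ⊆ S := hAB.mono fun j hj s hs => by
    obtain ⟨k, hjk, hkj⟩ := (hj.and hBA).exists
    exact hkj.mono fun j' hj' => hj' (hjk hs)
  have hSB : ∀ s ∈ S, ∀ᶠ k in l₂, s ∈ B k := fun s hs => by
    obtain ⟨j, hsj, hj⟩ := (hs.and hAB).exists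
    exact hj.mono fun k hk => hk hsj
  rw [(tendsto_csInf_of_eventually_subset hS hBS hSB).limUnder_eq,
    (tendsto_csInf_of_eventually_subset hS hAS fun _ hs => hs).limUnder_eq]

end Interleaved

section Covers

variable {X : Type*}

def Refines (𝒰 𝒱 : Set (Set X)) : Prop := ∀ U ∈ 𝒰, ∃ V ∈ 𝒱, U ⊆ V

lemma coverNum_le_card {𝒰 : Set (Set X)} {E : Set X} (t : Finset (Set X)) (ht : ↑t ⊆ 𝒰)
    (hE : E ⊆ ⋃₀ (t : Set (Set X))) : coverNum 𝒰 E ≤ t.card :=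
  Nat.sInf_le ⟨t, ht, rfl, hE⟩

lemma exists_finset_card_eq_coverNum {𝒰 : Set (Set X)} {E : Set X} (h𝒰 : 𝒰.Finite)
    (hE : E ⊆ ⋃₀ 𝒰) :
    ∃ t : Finset (Set X), ↑t ⊆ 𝒰 ∧ t.card = coverNum 𝒰 E ∧ E ⊆ ⋃₀ (t : Set (Set X)) :=
  Nat.sInf_mem (s := {k | ∃ t : Finset (Set X), (t : Set (Set X)) ⊆ 𝒰 ∧ t.card = k ∧
    E ⊆ ⋃₀ (t : Set (Set X))}) ⟨_, h𝒰.toFinset, by simp, rfl, by simpa using hE⟩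

lemma coverNum_le_of_refines {𝒰 𝒱 : Set (Set X)} {E : Set X} (h𝒰 : 𝒰.Finite)
    (hE : E ⊆ ⋃₀ 𝒰) (h : Refines 𝒰 𝒱) : coverNum 𝒱 E ≤ coverNum 𝒰 E := by
  classical
  obtain ⟨t, ht𝒰, htcard, htE⟩ := exists_finset_card_eq_coverNum h𝒰 hE
  obtain ⟨ρ, hρ⟩ := exists_fun_forall_mem (s := (t : Set (Set X))) fun U hU => h U (ht𝒰 hU)
  refine (coverNum_le_card (t.image ρ) ?_ ?_).trans (htcard ▸ Finset.card_image_le)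
  · simpa [Set.subset_def] using fun U hU => (hρ U hU).1
  · intro e he
    obtain ⟨U, hU, heU⟩ := htE he
    exact ⟨ρ U, by simpa using ⟨U, hU, rfl⟩, (hρ U hU).2 heU⟩

lemma coverNum_le_NRel {Z : Type*} {𝒰 : Set (Set X)} (π : X → Z) (h𝒰 : 𝒰.Finite)
    (hcov : ⋃₀ 𝒰 = univ) (z : Z) : coverNum 𝒰 (π ⁻¹' {z}) ≤ NRel 𝒰 π := by
  refine le_ciSup (f := fun z => coverNum 𝒰 (π ⁻¹' {z})) ⟨h𝒰.toFinset.card, ?_⟩ z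
  rintro _ ⟨z', rfl⟩
  exact coverNum_le_card _ (by simp) (by simp [hcov])

lemma sUnion_range_compl_eq_univ {ι : Type*} {K : ι → Set X} {i j : ι}
    (h : Disjoint (K i) (K j)) : ⋃₀ range (fun i => (K i)ᶜ) = univ := by
  refine eq_univ_of_forall fun p => ?_
  by_cases hp : p ∈ K i
  · exact ⟨_, ⟨j, rfl⟩, fun hpj => h.ne_of_mem hp hpj rfl⟩
  · exact ⟨_, ⟨i, rfl⟩, hp⟩

lemma NRel_le_of_refines {Z : Type*} {𝒰 𝒱 : Set (Set X)} (π : X → Z) (h𝒰 : 𝒰.Finite)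
    (hcov : ⋃₀ 𝒰 = univ) (h : Refines 𝒰 𝒱) : NRel 𝒱 π ≤ NRel 𝒰 π :=
  ciSup_le' fun z => (coverNum_le_of_refines h𝒰 (by simp [hcov]) h).trans
    (coverNum_le_NRel π h𝒰 hcov z)

end Covers

section DynJoin

variable {G X : Type*} [Group G] [MulAction G X]

lemma dynJoin_finite {B : Finset G} {𝒰 : Set (Set X)} (h : 𝒰.Finite) :
    (dynJoin B 𝒰).Finite := by
  refine ((Set.Finite.pi (t := fun _ : B => 𝒰) fun _ => h).image
    fun f => ⋂ g : B, (fun x => (g : G) • x) ⁻¹' f g).subset ?_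
  rintro W ⟨f, hf, rfl⟩
  exact ⟨fun g => f g, fun g _ => hf g g.2, by simp [Set.iInter_subtype]⟩

lemma sUnion_dynJoin {B : Finset G} {𝒰 : Set (Set X)} (h : ⋃₀ 𝒰 = univ) :
    ⋃₀ dynJoin B 𝒰 = univ := by
  refine eq_univ_of_forall fun x => ?_
  have hx : ∀ g : G, ∃ U ∈ 𝒰, g • x ∈ U := fun g => mem_sUnion.1 (h ▸ mem_univ (g • x))
  choose f hf hxf using hx
  exact ⟨_, ⟨f, fun g _ => hf g, rfl⟩, mem_iInter₂.2 fun g _ => hxf g⟩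

lemma Refines.dynJoin {B : Finset G} {𝒰 𝒱 : Set (Set X)} (h : Refines 𝒰 𝒱) :
    Refines (dynJoin B 𝒰) (dynJoin B 𝒱) := by
  rintro W ⟨f, hf, rfl⟩
  obtain ⟨f', hf'⟩ := exists_fun_forall_mem (s := (B : Set G)) fun g hg => h (f g) (hf g hg)
  exact ⟨_, ⟨f', fun g hg => (hf' g hg).1, rfl⟩,
    iInter₂_mono fun g hg => preimage_mono (hf' g hg).2⟩

lemma NRel_dynJoin_le_of_refines {Z : Type*} {B : Finset G} {𝒰 𝒱 : Set (Set X)} (π : X → Z)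
    (h𝒰 : 𝒰.Finite) (hcov : ⋃₀ 𝒰 = univ) (h : Refines 𝒰 𝒱) :
    NRel (dynJoin B 𝒱) π ≤ NRel (dynJoin B 𝒰) π :=
  NRel_le_of_refines π (dynJoin_finite h𝒰) (sUnion_dynJoin hcov) h.dynJoin

end DynJoin

section IJoin

variable {X : Type*}

def iJoin {ι : Type*} (𝒰 : ι → Set (Set X)) : Set (Set X) :=
  {W | ∃ V : ι → Set X, (∀ s, V s ∈ 𝒰 s) ∧ W = ⋂ s, V s}

variable {ι : Type*} {𝒰 : ι → Set (Set X)}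

lemma iJoin_finite [Finite ι] (h : ∀ s, (𝒰 s).Finite) : (iJoin 𝒰).Finite := by
  refine ((Set.Finite.pi h).image fun V => ⋂ s, V s).subset ?_
  rintro W ⟨V, hV, rfl⟩
  exact ⟨V, fun s _ => hV s, rfl⟩

lemma sUnion_iJoin (h : ∀ s, ⋃₀ 𝒰 s = univ) : ⋃₀ iJoin 𝒰 = univ := by
  refine eq_univ_of_forall fun x => ?_
  have hx : ∀ s, ∃ V ∈ 𝒰 s, x ∈ V := fun s => mem_sUnion.1 (h s ▸ mem_univ x)
  choose V hV hxV using hx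
  exact ⟨_, ⟨V, hV, rfl⟩, mem_iInter.2 hxV⟩

lemma coverNum_iJoin_le [Fintype ι] {E : Set X} (h : ∀ s, (𝒰 s).Finite)
    (hE : ∀ s, E ⊆ ⋃₀ 𝒰 s) : coverNum (iJoin 𝒰) E ≤ ∏ s, coverNum (𝒰 s) E := by
  classical
  choose t ht𝒰 htcard htE using fun s => exists_finset_card_eq_coverNum (h s) (hE s)
  calc coverNum (iJoin 𝒰) E
      ≤ ((Fintype.piFinset t).image fun V => ⋂ s, V s).card := by
        refine coverNum_le_card _ ?_ ?_
        · simp only [Finset.coe_image, image_subset_iff]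
          exact fun V hV => ⟨V, fun s => ht𝒰 s (Fintype.mem_piFinset.1 hV s), rfl⟩
        · intro e he
          have hV : ∀ s, ∃ V ∈ t s, e ∈ V := fun s => by simpa using htE s he
          choose V hVt heV using hV
          exact ⟨⋂ s, V s, by simpa using ⟨V, hVt, rfl⟩, mem_iInter.2 heV⟩
    _ ≤ (Fintype.piFinset t).card := Finset.card_image_le
    _ = ∏ s, coverNum (𝒰 s) E := by simp [htcard]

lemma NRel_iJoin_le [Fintype ι] {Z : Type*} (π : X → Z) (h : ∀ s, (𝒰 s).Finite)
    (hcov : ∀ s, ⋃₀ 𝒰 s = univ) : NRel (iJoin 𝒰) π ≤ ∏ s, NRel (𝒰 s) π :=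
  ciSup_le' fun z => (coverNum_iJoin_le h fun s => by simp [hcov s]).trans <|
    Finset.prod_le_prod' fun s _ => coverNum_le_NRel π (h s) (hcov s) z

lemma refines_iJoin_dynJoin {G : Type*} [Group G] [MulAction G X] (B : Finset G) :
    Refines (iJoin fun s => dynJoin B (𝒰 s)) (dynJoin B (iJoin 𝒰)) := by
  rintro W ⟨V, hV, rfl⟩
  choose f hf hVf using hV
  refine ⟨_, ⟨fun g => ⋂ s, f s g, fun g hg => ⟨fun s => f s g, fun s => hf s g hg, rfl⟩,
    rfl⟩, ?_⟩
  intro x hx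
  simp only [hVf, mem_iInter, mem_preimage] at hx ⊢
  exact fun g hg s => hx s g hg

lemma exists_forall_exists_eval_eq {β : ι → Type*} (σ : (∀ i, β i) → ι) :
    ∃ i, ∀ a : β i, ∃ c, σ c = i ∧ c i = a := by
  -- otherwise the choice function picking at each `i` a value missed at `i` has no index
  by_contra! h
  choose a ha using h
  exact ha _ a rfl rfl

lemma refines_iJoin_range_compl {β : ι → Type*} (K : ∀ i, β i → Set X) :
    Refines (iJoin fun c : (∀ i, β i) => range fun i => (K i (c i))ᶜ)
      (range fun i => (⋃ a, K i a)ᶜ) := by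
  rintro W ⟨V, hV, rfl⟩
  choose σ hσ using hV
  obtain ⟨i, hi⟩ := exists_forall_exists_eval_eq σ
  refine ⟨_, ⟨i, rfl⟩, fun x hx => ?_⟩
  simp only [mem_compl_iff, mem_iUnion, not_exists]
  intro a hxa
  obtain ⟨c, rfl, rfl⟩ := hi a
  have hxc := mem_iInter.1 hx c
  rw [← hσ c] at hxc
  exact hxc hxa

end IJoin

section Pullback

variable {G X Y : Type*} [Group G] [MulAction G X] [MulAction G Y]

lemma dynJoin_image_preimage {B : Finset G} {π : X → Y}
    (hπ : ∀ (g : G) (x : X), π (g • x) = g • π x) (𝒱 : Set (Set Y)) :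
    dynJoin B (preimage π '' 𝒱) = preimage π '' dynJoin B 𝒱 := by
  have hpre : ∀ (g : G) (V : Set Y),
      (fun x : X => g • x) ⁻¹' (π ⁻¹' V) = π ⁻¹' ((fun y : Y => g • y) ⁻¹' V) :=
    fun g V => by ext x; simp [hπ g x]
  ext W
  constructor
  · rintro ⟨f, hf, rfl⟩
    obtain ⟨v, hv⟩ := exists_fun_forall_mem (s := (B : Set G)) fun g hg => hf g hg
    refine ⟨_, ⟨v, fun g hg => (hv g hg).1, rfl⟩, ?_⟩
    simp only [preimage_iInter]
    exact iInter₂_congr fun g hg => by rw [← hpre, (hv g hg).2]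
  · rintro ⟨W', ⟨v, hv, rfl⟩, rfl⟩
    refine ⟨fun g => π ⁻¹' v g, fun g hg => ⟨v g, hv g hg, rfl⟩, ?_⟩
    simp only [preimage_iInter, hpre]

lemma coverNum_image_preimage {𝒜 : Set (Set Y)} {E : Set Y} {π : X → Y}
    (hπ : Function.Surjective π) : coverNum (preimage π '' 𝒜) (π ⁻¹' E) = coverNum 𝒜 E := by
  classical
  have hinj := hπ.preimage_injective
  unfold coverNum
  congr 1
  ext k
  constructor
  · rintro ⟨t', ht', rfl, hE⟩
    obtain ⟨t, ht𝒜, rfl⟩ := Finset.subset_set_image_iff.1 ht'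
    refine ⟨t, ht𝒜, (Finset.card_image_of_injective t hinj).symm, fun e he => ?_⟩
    obtain ⟨x, rfl⟩ := hπ e
    obtain ⟨_, hA, hxA⟩ := hE he
    obtain ⟨A, hAt, rfl⟩ := Finset.mem_image.1 hA
    exact ⟨A, hAt, hxA⟩
  · rintro ⟨t, ht𝒜, rfl, hE⟩
    refine ⟨t.image (preimage π), ?_, Finset.card_image_of_injective t hinj, fun x hx => ?_⟩
    · simpa using image_mono (f := preimage π) ht𝒜
    · obtain ⟨A, hAt, hxA⟩ := hE hx
      exact ⟨π ⁻¹' A, by simpa using ⟨A, hAt, rfl⟩, hxA⟩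

lemma NRel_dynJoin_image_preimage {Z : Type*} {B : Finset G} {π : X → Y} {πX : X → Z}
    {πY : Y → Z} (hπs : Function.Surjective π) (hπe : ∀ (g : G) (x : X), π (g • x) = g • π x)
    (hcomm : πY ∘ π = πX) (𝒱 : Set (Set Y)) :
    NRel (dynJoin B (preimage π '' 𝒱)) πX = NRel (dynJoin B 𝒱) πY := by
  refine iSup_congr fun z => ?_
  rw [← hcomm, dynJoin_image_preimage hπe, preimage_comp, coverNum_image_preimage hπs]

end Pullback

section ZeroExponents

variable {G X Z : Type*} [Group G] [MulAction G X]

/-- `DU F 𝒰 π` is `sInf (zeroExponents F 𝒰 π)`; comparing these sets rather than their infima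
sidesteps the junk value `sInf ∅ = 0`. -/
def zeroExponents (F : ℕ → Finset G) (𝒰 : Set (Set X)) (π : X → Z) : Set ℝ :=
  {α | 0 ≤ α ∧ hRelU F 𝒰 π α = 0}

variable {F : ℕ → Finset G}

lemma isUpperSet_zeroExponents (hF : ∀ m, (F m).Nonempty) (𝒰 : Set (Set X)) (π : X → Z) :
    IsUpperSet (zeroExponents F 𝒰 π) := by
  rintro α β hαβ ⟨hα, hαz⟩
  refine ⟨hα.trans hαβ, le_antisymm (hαz ▸ limsup_le_limsup (Eventually.of_forall fun m => ?_))
    bot_le⟩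
  refine ENNReal.div_le_div_left (ENNReal.ofReal_le_ofReal ?_) _
  exact Real.rpow_le_rpow_of_exponent_le (by exact_mod_cast (hF m).card_pos) hαβ

lemma hRelU_mono {X' Z' : Type*} [MulAction G X'] {𝒰 : Set (Set X)} {𝒰' : Set (Set X')}
    {π : X → Z} {π' : X' → Z'}
    (h : ∀ m, NRel (dynJoin (F m) 𝒰) π ≤ NRel (dynJoin (F m) 𝒰') π') (α : ℝ) :
    hRelU F 𝒰 π α ≤ hRelU F 𝒰' π' α :=
  limsup_le_limsup <| Eventually.of_forall fun m => ENNReal.div_le_div_right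
    (ENNReal.ofReal_le_ofReal (Real.log_natCast_mono (h m))) _

lemma zeroExponents_subset_of_refines {𝒰 𝒱 : Set (Set X)} (π : X → Z) (h𝒰 : 𝒰.Finite)
    (hcov : ⋃₀ 𝒰 = univ) (h : Refines 𝒰 𝒱) : zeroExponents F 𝒰 π ⊆ zeroExponents F 𝒱 π :=
  fun α ⟨hα, hαz⟩ => ⟨hα, le_antisymm (hαz ▸ hRelU_mono (fun _ =>
    NRel_dynJoin_le_of_refines π h𝒰 hcov h) α) bot_le⟩

lemma zeroExponents_image_preimage {Y : Type*} [MulAction G Y] {π : X → Y} {πX : X → Z}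
    {πY : Y → Z} (hπs : Function.Surjective π) (hπe : ∀ (g : G) (x : X), π (g • x) = g • π x)
    (hcomm : πY ∘ π = πX) (𝒱 : Set (Set Y)) :
    zeroExponents F (preimage π '' 𝒱) πX = zeroExponents F 𝒱 πY := by
  simp only [zeroExponents, hRelU, NRel_dynJoin_image_preimage hπs hπe hcomm]

/-- `log N` is subadditive along a join. -/
lemma hRelU_iJoin_eq_zero {ι : Type*} [Fintype ι] {𝒰 : ι → Set (Set X)} {π : X → Z} {α : ℝ}
    (hfin : ∀ s, (𝒰 s).Finite) (hcov : ∀ s, ⋃₀ 𝒰 s = univ) (hz : ∀ s, hRelU F (𝒰 s) π α = 0) :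
    hRelU F (iJoin 𝒰) π α = 0 := by
  set D : ℕ → ℝ≥0∞ := fun m => ENNReal.ofReal (((F m).card : ℝ) ^ α)
  set r : Set (Set X) → ℕ → ℝ≥0∞ :=
    fun 𝒱 m => ENNReal.ofReal (Real.log (NRel (dynJoin (F m) 𝒱) π)) / D m
  have hr : ∀ s, Tendsto (r (𝒰 s)) atTop (𝓝 0) := fun s =>
    tendsto_of_liminf_eq_limsup (le_antisymm (hz s ▸ liminf_le_limsup) bot_le) (hz s)
  have hle : ∀ m, r (iJoin 𝒰) m ≤ ∑ s, r (𝒰 s) m := by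
    intro m
    have hN : NRel (dynJoin (F m) (iJoin 𝒰)) π ≤ ∏ s, NRel (dynJoin (F m) (𝒰 s)) π :=
      (NRel_le_of_refines π (iJoin_finite fun s => dynJoin_finite (hfin s))
        (sUnion_iJoin fun s => sUnion_dynJoin (hcov s)) (refines_iJoin_dynJoin _)).trans
        (NRel_iJoin_le π (fun s => dynJoin_finite (hfin s)) fun s => sUnion_dynJoin (hcov s))
    calc r (iJoin 𝒰) m
        ≤ ENNReal.ofReal (∑ s, Real.log (NRel (dynJoin (F m) (𝒰 s)) π)) / D m :=
          ENNReal.div_le_div_right (ENNReal.ofReal_le_ofReal (Real.log_natCast_le_sum_log hN)) _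
      _ = ∑ s, r (𝒰 s) m := by
          rw [ENNReal.ofReal_sum_of_nonneg fun s _ => Real.log_natCast_nonneg _]
          simp only [r, div_eq_mul_inv, Finset.sum_mul]
  have hsum : Tendsto (fun m => ∑ s, r (𝒰 s) m) atTop (𝓝 0) := by
    simpa using tendsto_finsetSum Finset.univ fun s _ => hr s
  exact (tendsto_of_tendsto_of_tendsto_of_le_of_le tendsto_const_nhds hsum (fun _ => bot_le)
    hle).limsup_eq

lemma exists_zeroExponents_subset_of_iJoin_refines {ι : Type*} [Finite ι] [Nonempty ι]
    (hF : ∀ m, (F m).Nonempty) {𝒰 : ι → Set (Set X)} {𝒞 : Set (Set X)} (π : X → Z)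
    (hfin : ∀ s, (𝒰 s).Finite) (hcov : ∀ s, ⋃₀ 𝒰 s = univ) (h : Refines (iJoin 𝒰) 𝒞) :
    ∃ s, zeroExponents F (𝒰 s) π ⊆ zeroExponents F 𝒞 π := by
  have := Fintype.ofFinite ι
  refine exists_subset_of_iInter_subset (fun s => isUpperSet_zeroExponents hF _ π) ?_
  intro α hα
  obtain ⟨s₀⟩ := ‹Nonempty ι›
  refine zeroExponents_subset_of_refines π (iJoin_finite hfin) (sUnion_iJoin hcov) h
    ⟨(mem_iInter.1 hα s₀).1, hRelU_iJoin_eq_zero hfin hcov fun s => (mem_iInter.1 hα s).2⟩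

end ZeroExponents

section Metric

variable {X : Type*} [MetricSpace X]

lemma eventually_closedBall_one_div_subset {x : X} {U : Set X} (hU : U ∈ 𝓝 x) :
    ∀ᶠ k : ℕ in atTop, closedBall x (1 / k) ⊆ U := by
  obtain ⟨ε, hε, hball⟩ := Metric.mem_nhds_iff.1 hU
  filter_upwards [tendsto_one_div_atTop_nhds_zero_nat.eventually (gt_mem_nhds hε)] with k hk
  exact (closedBall_subset_ball hk).trans hball

lemma eventually_preimage_closedBall_one_div_subset {W : Type*} [TopologicalSpace W]
    [CompactSpace W] {π : W → X} (hπ : Continuous π) {O : Set W} (hO : IsOpen O) {y : X}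
    (hy : π ⁻¹' {y} ⊆ O) : ∀ᶠ j : ℕ in atTop, π ⁻¹' closedBall y (1 / j) ⊆ O := by
  have hker : kernImage π O ∈ 𝓝 y :=
    (isClosedMap_iff_kernImage.1 hπ.isClosedMap hO).mem_nhds (subset_kernImage_iff.2 hy rfl)
  exact (eventually_closedBall_one_div_subset hker).mono fun j hj =>
    subset_kernImage_iff.1 hj

variable {n : ℕ}

lemma ballCover_eq_range (x : Fin n → X) (k : ℕ) :
    ballCover x k = range fun i => (closedBall (x i) (1 / k))ᶜ := by
  ext V
  simp [ballCover, eq_comm]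

lemma ballCover_finite (x : Fin n → X) (k : ℕ) : (ballCover x k).Finite :=
  ballCover_eq_range x k ▸ finite_range _

lemma eventually_sUnion_ballCover_eq_univ {x : Fin n → X} (hx : ¬ IsDiag x) :
    ∀ᶠ k in atTop, ⋃₀ ballCover x k = univ := by
  obtain ⟨i, j, hij⟩ : ∃ i j, x i ≠ x j := by simpa [IsDiag] using hx
  have hd : 0 < dist (x i) (x j) / 2 := half_pos (dist_pos.2 hij)
  filter_upwards [tendsto_one_div_atTop_nhds_zero_nat.eventually (gt_mem_nhds hd)] with k hk
  rw [ballCover_eq_range]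
  exact sUnion_range_compl_eq_univ (closedBall_disjoint_closedBall
    (add_halves (dist (x i) (x j)) ▸ add_lt_add hk hk))

lemma refines_ballCover {x x' : Fin n → X} {k l : ℕ}
    (h : ∀ i, closedBall (x' i) (1 / l) ⊆ closedBall (x i) (1 / k)) :
    Refines (ballCover x k) (ballCover x' l) := by
  rintro _ ⟨i, rfl⟩
  exact ⟨_, ⟨i, rfl⟩, compl_subset_compl.2 (h i)⟩

end Metric

section Lift

variable {G X Y Z : Type*} [Group G] [MetricSpace X] [MetricSpace Y]
  [MulAction G X] [MulAction G Y] {F : ℕ → Finset G} {n : ℕ}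

lemma zeroExponents_ballCover_subset_of_dist {π : X → Z} {x x' : Fin n → X} {k l : ℕ}
    (hcov : ⋃₀ ballCover x k = univ) (h : ∀ i, 1 / (l : ℝ) + dist (x' i) (x i) ≤ 1 / k) :
    zeroExponents F (ballCover x k) π ⊆ zeroExponents F (ballCover x' l) π :=
  zeroExponents_subset_of_refines π (ballCover_finite x k) hcov
    (refines_ballCover fun i => closedBall_subset_closedBall' (h i))

variable {π : X → Y} {πX : X → Z} {πY : Y → Z}

lemma eventually_eventually_zeroExponents_ballCover_subset (hπc : Continuous π)
    (hπs : Function.Surjective π) (hπe : ∀ (g : G) (x : X), π (g • x) = g • π x)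
    (hcomm : πY ∘ π = πX) {x : Fin n → X} {y : Fin n → Y} (hxy : ∀ i, π (x i) = y i)
    (hy : ¬ IsDiag y) :
    ∀ᶠ j in atTop, ∀ᶠ k in atTop,
      zeroExponents F (ballCover y j) πY ⊆ zeroExponents F (ballCover x k) πX := by
  filter_upwards [eventually_sUnion_ballCover_eq_univ hy, eventually_gt_atTop 0] with j hj hj0
  have hball : ∀ᶠ k : ℕ in atTop, ∀ i,
      closedBall (x i) (1 / k) ⊆ π ⁻¹' closedBall (y i) (1 / j) := by
    refine eventually_all.2 fun i => eventually_closedBall_one_div_subset <|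
      hπc.continuousAt.preimage_mem_nhds ?_
    rw [hxy i]
    exact closedBall_mem_nhds _ (div_pos one_pos (Nat.cast_pos.2 hj0))
  filter_upwards [hball] with k hk
  rw [← zeroExponents_image_preimage hπs hπe hcomm]
  refine zeroExponents_subset_of_refines πX ((ballCover_finite y j).image _)
    (by rw [sUnion_image, ← preimage_sUnion, hj, preimage_univ]) ?_
  rintro _ ⟨_, ⟨i, rfl⟩, rfl⟩
  exact ⟨_, ⟨i, rfl⟩, by rw [preimage_compl]; exact compl_subset_compl.2 (hk i)⟩

lemma eventually_refines_preimage_ballCover [CompactSpace X] (hπc : Continuous π)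
    {y : Fin n → Y} {t : Fin n → Set X} {r : ℝ} (ht : ∀ i, π ⁻¹' {y i} ⊆ ⋃ a ∈ t i, ball a r) :
    ∀ᶠ j in atTop, Refines (range fun i => (⋃ a : t i, closedBall (a : X) r)ᶜ)
      (preimage π '' ballCover y j) := by
  have hO : ∀ i, ⋃ a ∈ t i, ball a r ⊆ ⋃ a : t i, closedBall (a : X) r := fun i =>
    iUnion₂_subset fun a ha => ball_subset_closedBall.trans
      (subset_iUnion (fun a : t i => closedBall (a : X) r) ⟨a, ha⟩)
  filter_upwards [eventually_all.2 fun i => eventually_preimage_closedBall_one_div_subset hπc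
    (isOpen_biUnion fun a _ => isOpen_ball) (ht i)] with j hj
  rintro _ ⟨i, rfl⟩
  exact ⟨_, ⟨_, ⟨i, rfl⟩, rfl⟩, by
    rw [preimage_compl]; exact compl_subset_compl.2 ((hj i).trans (hO i))⟩

lemma exists_lift_eventually_zeroExponents_ballCover_subset [CompactSpace X]
    (hπc : Continuous π) (hπs : Function.Surjective π)
    (hπe : ∀ (g : G) (x : X), π (g • x) = g • π x) (hcomm : πY ∘ π = πX)
    (hF : ∀ m, (F m).Nonempty) {y : Fin n → Y} {i₀ j₀ : Fin n} {δ : ℝ}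
    (hsep : Disjoint (thickening δ (π ⁻¹' {y i₀})) (thickening δ (π ⁻¹' {y j₀})))
    {l : ℕ} (hl : 0 < l) (hlδ : 1 / (l : ℝ) < δ) :
    ∃ c : Fin n → X, (∀ i, π (c i) = y i) ∧ ∀ᶠ j in atTop,
      zeroExponents F (ballCover c l) πX ⊆ zeroExponents F (ballCover y j) πY := by
  set r : ℝ := 1 / l
  have hr : 0 < r := by positivity
  choose t ht htfin htcov using fun i =>
    (isClosed_singleton.preimage hπc : IsClosed (π ⁻¹' {y i})).isCompact.finite_cover_balls hr
  have := fun i => (htfin i).to_subtype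
  have : ∀ i, Nonempty (t i) := fun i => by
    obtain ⟨x, hx⟩ := hπs (y i)
    obtain ⟨a, ha, -⟩ := mem_iUnion₂.1 (htcov i hx)
    exact ⟨⟨a, ha⟩⟩
  set N : Fin n → Set X := fun i => ⋃ a : t i, closedBall (a : X) r
  have hN : ∀ i, N i ⊆ thickening δ (π ⁻¹' {y i}) := fun i =>
    iUnion_subset fun a p hp =>
      mem_thickening_iff.2 ⟨a, ht i a.2, (mem_closedBall.1 hp).trans_lt hlδ⟩
  have hdisj : Disjoint (N i₀) (N j₀) := hsep.mono (hN i₀) (hN j₀)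
  have hcov : ∀ c : (∀ i, t i), ⋃₀ ballCover (fun i => (c i : X)) l = univ := fun c => by
    rw [ballCover_eq_range]
    exact sUnion_range_compl_eq_univ (hdisj.mono
      (subset_iUnion (fun a : t i₀ => closedBall (a : X) r) (c i₀))
      (subset_iUnion (fun a : t j₀ => closedBall (a : X) r) (c j₀)))
  have hjoin : Refines (iJoin fun c : (∀ i, t i) => ballCover (fun i => (c i : X)) l)
      (range fun i => (N i)ᶜ) := by
    simpa only [ballCover_eq_range] using
      refines_iJoin_range_compl fun i (a : t i) => closedBall (a : X) r
  obtain ⟨c, hc⟩ := exists_zeroExponents_subset_of_iJoin_refines hF πX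
    (fun c => ballCover_finite _ l) hcov hjoin
  refine ⟨fun i => c i, fun i => ht i (c i).2, (eventually_refines_preimage_ballCover hπc
    htcov).mono fun j hj => hc.trans ?_⟩
  rw [← zeroExponents_image_preimage hπs hπe hcomm]
  exact zeroExponents_subset_of_refines πX (finite_range _)
    (sUnion_range_compl_eq_univ hdisj) hj

lemma eventually_eventually_zeroExponents_subset_of_mapClusterPt {A : ℕ → Set ℝ}
    {c : ℕ → Fin n → X} {x : Fin n → X} (hx : ¬ IsDiag x) (hcx : MapClusterPt x atTop c)
    (hc : ∀ᶠ l in atTop, ∀ᶠ j in atTop, zeroExponents F (ballCover (c l) l) πX ⊆ A j) :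
    ∀ᶠ k in atTop, ∀ᶠ j in atTop, zeroExponents F (ballCover x k) πX ⊆ A j := by
  filter_upwards [eventually_sUnion_ballCover_eq_univ hx, eventually_gt_atTop 0] with k hcov hk
  have hε : (0 : ℝ) < 1 / k / 2 := by positivity
  obtain ⟨l, hlx, hl, hlε⟩ := ((hcx.frequently (ball_mem_nhds x hε)).and_eventually
    (hc.and (tendsto_one_div_atTop_nhds_zero_nat.eventually (gt_mem_nhds hε)))).exists
  refine hl.mono fun j hj => (zeroExponents_ballCover_subset_of_dist hcov fun i => ?_).trans hj
  have := (dist_le_pi_dist (c l) x i).trans_lt hlx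
  linarith [add_halves (1 / (k : ℝ))]

end Lift

theorem stmt18_general {G X Y Z : Type*} [Group G]
    [MetricSpace X] [CompactSpace X] [MetricSpace Y]
    [MulAction G X] [MulAction G Y]
    (π : X → Y) (πX : X → Z) (πY : Y → Z)
    (hπ : IsFactorMap G π)
    (hcomm : πY ∘ π = πX)
    (F : ℕ → Finset G) (hF : IsFolnerSeq G F)
    {n : ℕ} (y : Fin n → Y) (hy : ¬ IsDiag y) (α : ℝ)
    (hdim : tupleDim F y πY = α) :
    ∃ x : Fin n → X, (∀ i, π (x i) = y i) ∧ ¬ IsDiag x ∧ tupleDim F x πX = α := by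
  obtain ⟨hπc, hπs, hπe⟩ := hπ
  obtain ⟨i₀, j₀, hyij⟩ : ∃ i j, y i ≠ y j := by simpa [IsDiag] using hy
  have hfib : ∀ i, IsCompact (π ⁻¹' {y i}) := fun i =>
    (isClosed_singleton.preimage hπc).isCompact
  obtain ⟨δ, hδ, hsep⟩ := (disjoint_singleton.2 hyij).preimage π |>.exists_thickenings
    (hfib i₀) (hfib j₀).isClosed
  have hstage : ∀ᶠ l in atTop, ∃ c : Fin n → X, (∀ i, π (c i) = y i) ∧
      ∀ᶠ j in atTop, zeroExponents F (ballCover c l) πX ⊆ zeroExponents F (ballCover y j) πY := by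
    filter_upwards [eventually_gt_atTop 0, tendsto_one_div_atTop_nhds_zero_nat.eventually
      (gt_mem_nhds hδ)] with l hl hlδ
    exact exists_lift_eventually_zeroExponents_ballCover_subset hπc hπs hπe hcomm hF.1 hsep hl hlδ
  obtain ⟨c, hc⟩ := hstage.choice
  obtain ⟨x, hx_lift, hcx⟩ := (isCompact_univ_pi hfib).exists_mapClusterPt_of_frequently
    (hc.frequently.mono fun l hl => mem_univ_pi.2 hl.1)
  have hx_lift : ∀ i, π (x i) = y i := mem_univ_pi.1 hx_lift
  have hx_off : ¬ IsDiag x := fun h => hyij (by rw [← hx_lift i₀, ← hx_lift j₀, h i₀ j₀])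
  refine ⟨x, hx_lift, hx_off, hdim ▸ limUnder_csInf_eq_of_interleaved
    (l₁ := atTop) (l₂ := atTop) (A := fun j => zeroExponents F (ballCover y j) πY)
    (B := fun k => zeroExponents F (ballCover x k) πX) ?_
    (eventually_eventually_zeroExponents_ballCover_subset hπc hπs hπe hcomm hx_lift hy)
    (eventually_eventually_zeroExponents_subset_of_mapClusterPt hx_off hcx
      (hc.mono fun l hl => hl.2))⟩
  exact ⟨0, by simp only [mem_lowerBounds, mem_iUnion]; exact fun a ⟨_, ha⟩ => ha.1⟩

theorem stmt18 {G X Y Z : Type*} [Group G] [Countable G]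
    [MetricSpace X] [CompactSpace X] [MetricSpace Y] [CompactSpace Y]
    [MetricSpace Z] [CompactSpace Z]
    [MulAction G X] [MulAction G Y] [MulAction G Z]
    (hcX : ∀ g : G, Continuous fun x : X => g • x)
    (hcY : ∀ g : G, Continuous fun y : Y => g • y)
    (hcZ : ∀ g : G, Continuous fun z : Z => g • z)
    (π : X → Y) (πX : X → Z) (πY : Y → Z)
    (hπ : IsFactorMap G π) (hπX : IsFactorMap G πX) (hπY : IsFactorMap G πY)
    (hcomm : πY ∘ π = πX)
    (F : ℕ → Finset G) (hF : IsFolnerSeq G F) (hFmono : ∀ n, F n ⊆ F (n + 1))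
    {n : ℕ} (y : Fin n → Y) (hy : ¬ IsDiag y) (α : ℝ)
    (hdim : tupleDim F y πY = α) :
    ∃ x : Fin n → X, (∀ i, π (x i) = y i) ∧ ¬ IsDiag x ∧ tupleDim F x πX = α :=
  stmt18_general π πX πY hπ hcomm F hF y hy α hdim
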